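/- On the D2Q9 lattice, the first-order non-equilibrium moment expression derived in the Chapman-Enskog analysis, B_α = −Δt τ [∂_t(φu_α) + ∂_β(φ u_α u_β + φ c_s² δ_{αβ}) − (1 − 1/(2τ)) φ u_β ∂_β u_α − (1 − 1/(2τ)) u_α S], reduces, under the assumptions ∂_t u_α = 0 and the conservation law ∂_t φ + ∂_β(φ u_β) = S, to B_α = −Δt τ c_s² ∂_α φ − (Δt/2)[φ u_β ∂_β u_α + u_α S]. -/

import Mathlib

/-- Spatial partial derivative in direction `β ∈ {x, y}` of a function of `(x, y, t)`. -/
noncomputable def Dsp (β : Fin 2) (f : ℝ → ℝ → ℝ → ℝ) (x y t : ℝ) : ℝ :=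
  if β = 0 then deriv (fun x' => f x' y t) x else deriv (fun y' => f x y' t) y

/-- Time partial derivative of a function of `(x, y, t)`. -/
noncomputable def Dt (f : ℝ → ℝ → ℝ → ℝ) (x y t : ℝ) : ℝ :=
  deriv (fun t' => f x y t') t

/-- Kronecker delta on `Fin 2`. -/
noncomputable def kd (a b : Fin 2) : ℝ := if a = b then 1 else 0

theorem first_order_noneq_moment_reduction
    (τ Δt cs : ℝ) (hτ : 0 < τ) (hΔt : 0 < Δt) (hcs : 0 < cs)
    (φ S : ℝ → ℝ → ℝ → ℝ) (u : ℝ → ℝ → Fin 2 → ℝ)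
    (hφ : ContDiff ℝ (⊤ : ℕ∞) (fun p : ℝ × ℝ × ℝ => φ p.1 p.2.1 p.2.2))
    (hu : ∀ α : Fin 2, ContDiff ℝ (⊤ : ℕ∞) (fun p : ℝ × ℝ => u p.1 p.2 α))
    (hcons : ∀ x y t : ℝ,
      Dt φ x y t + ∑ β : Fin 2, Dsp β (fun x y t => φ x y t * u x y β) x y t = S x y t) :
    ∀ (α : Fin 2) (x y t : ℝ),
      -Δt * τ * (Dt (fun x y t => φ x y t * u x y α) x y t
        + (∑ β : Fin 2, Dsp β
            (fun x y t => φ x y t * u x y α * u x y β + φ x y t * cs^2 * kd α β) x y t)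
        - (1 - 1/(2*τ)) * φ x y t * (∑ β : Fin 2, u x y β * Dsp β (fun x y _ => u x y α) x y t)
        - (1 - 1/(2*τ)) * u x y α * S x y t)
      = -Δt * τ * cs^2 * Dsp α φ x y t
        - (Δt/2) * (φ x y t * (∑ β : Fin 2, u x y β * Dsp β (fun x y _ => u x y α) x y t)
            + u x y α * S x y t) := by
  intro α x y t
  have hτ0 : τ ≠ 0 := ne_of_gt hτ
  have hφ' : Differentiable ℝ (fun p : ℝ × ℝ × ℝ => φ p.1 p.2.1 p.2.2) :=
    hφ.differentiable (by simp)
  have hu' : ∀ γ : Fin 2, Differentiable ℝ (fun p : ℝ × ℝ => u p.1 p.2 γ) :=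
    fun γ => (hu γ).differentiable (by simp)
  have hPx : HasDerivAt (fun x' => φ x' y t) (deriv (fun x' => φ x' y t) x) x := by
    exact DifferentiableAt.hasDerivAt
      ((hφ'.comp (differentiable_id.prodMk (differentiable_const (y, t)))) x)
  have hPy : HasDerivAt (fun y' => φ x y' t) (deriv (fun y' => φ x y' t) y) y := by
    exact DifferentiableAt.hasDerivAt
      ((hφ'.comp ((differentiable_const x).prodMk
        (differentiable_id.prodMk (differentiable_const t)))) y)
  have hPt : HasDerivAt (fun t' => φ x y t') (deriv (fun t' => φ x y t') t) t := by
    exact DifferentiableAt.hasDerivAt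
      ((hφ'.comp ((differentiable_const x).prodMk
        ((differentiable_const y).prodMk differentiable_id))) t)
  have hUx : ∀ γ : Fin 2,
      HasDerivAt (fun x' => u x' y γ) (deriv (fun x' => u x' y γ) x) x := by
    intro γ
    exact DifferentiableAt.hasDerivAt
      (((hu' γ).comp (differentiable_id.prodMk (differentiable_const y))) x)
  have hUy : ∀ γ : Fin 2,
      HasDerivAt (fun y' => u x y' γ) (deriv (fun y' => u x y' γ) y) y := by
    intro γ
    exact DifferentiableAt.hasDerivAt
      (((hu' γ).comp ((differentiable_const x).prodMk differentiable_id)) y)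
  have hcons' := hcons x y t
  simp only [Dsp, Dt, Fin.sum_univ_two, if_pos, if_neg, Fin.isValue,
    reduceIte, one_ne_zero] at hcons' ⊢
  rw [(hPx.fun_mul (hUx 0)).deriv, (hPy.fun_mul (hUy 1)).deriv] at hcons'
  fin_cases α <;>
    simp only [Fin.isValue, kd, reduceIte, Fin.mk_zero, Fin.mk_one, zero_ne_one, one_ne_zero] <;>
    rw [(hPt.mul_const _).deriv,
      (((hPx.fun_mul (hUx _)).fun_mul (hUx 0)).fun_add ((hPx.mul_const (cs^2)).mul_const _)).deriv,
      (((hPy.fun_mul (hUy _)).fun_mul (hUy 1)).fun_add ((hPy.mul_const (cs^2)).mul_const _)).deriv,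
      ← hcons'] <;>
    field_simp <;> ring
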